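/- arXiv:2410.13222 — 6 statements merged into one kernel-verified Lean document; each statement's English description precedes it below -/
import Mathlib

section
/- Let A, Q : ℝ → Matrix (Fin n) (Fin n) ℝ and B : ℝ → Matrix (Fin n) (Fin m) ℝ be given with Q(t) symmetric for every t, and define the Hamiltonian matrix M(t) as the 2n×2n block matrix M(t) = [[A(t), −B(t)B(t)ᵀ],[−Q(t), −A(t)ᵀ]]. Suppose Φ : ℝ → Matrix (Fin n ⊕ Fin n) (Fin n ⊕ Fin n) ℝ satisfies, for every t, HasDerivAt Φ (M(t) · Φ(t)) t, and Φ(s) is the identity matrix for some s ∈ ℝ. Then for every t ∈ ℝ, the four n×n blocks Φ₁₁(t), Φ₁₂(t), Φ₂₁(t), Φ₂₂(t) of Φ(t) satisfy the symplectic block identities (i)–(vi). -/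
/-!
A Hamiltonian matrix `M` (one with `Mᵀ J + J M = 0`) generates a flow preserving the symplectic
form: if `Φ' = M Φ` then `(Φᵀ J Φ)' = Φᵀ (Mᵀ J + J M) Φ = 0`, so `Φᵀ J Φ = J` for all time since
`Φ(s) = 1`. Hence `Φ(t)` lies in the symplectic group, which is closed under transposition, so
`Φ J Φᵀ = J` holds as well. Identities (i)–(iii) are the block form of `Φᵀ J Φ = J`, and (iv)–(vi)
that of `Φ J Φᵀ = J`.
-/

open Matrix

attribute [instance] Matrix.normedAddCommGroup Matrix.normedSpace

/-- The symplectic block identities (i)–(vi) for four `n × n` real matrices. -/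
def SymplecticBlocks {n : ℕ} (P11 P12 P21 P22 : Matrix (Fin n) (Fin n) ℝ) : Prop :=
  P11ᵀ * P22 - P21ᵀ * P12 = 1 ∧
  P12ᵀ * P22 - P22ᵀ * P12 = 0 ∧
  P21ᵀ * P11 - P11ᵀ * P21 = 0 ∧
  P11 * P22ᵀ - P12 * P21ᵀ = 1 ∧
  P12 * P11ᵀ - P11 * P12ᵀ = 0 ∧
  P21 * P22ᵀ - P22 * P21ᵀ = 0

section Calculus

variable {𝕜 : Type*} [NontriviallyNormedField 𝕜] [CompleteSpace 𝕜]
  {l m n : Type*} [Fintype l] [Fintype m] [Fintype n] {x : 𝕜}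

theorem HasDerivAt.matrix_mul {f : 𝕜 → Matrix l m 𝕜} {g : 𝕜 → Matrix m n 𝕜}
    {f' : Matrix l m 𝕜} {g' : Matrix m n 𝕜} (hf : HasDerivAt f f' x) (hg : HasDerivAt g g' x) :
    HasDerivAt (fun y => f y * g y) (f' * g x + f x * g') x := by
  let mulCLM : Matrix l m 𝕜 →L[𝕜] Matrix m n 𝕜 →L[𝕜] Matrix l n 𝕜 :=
    LinearMap.toContinuousLinearMap
      (LinearMap.toContinuousLinearMap.toLinearMap ∘ₗ mulLinearMap 𝕜)
  exact (mulCLM.hasDerivAt_of_bilinear (fun _ => hf) (fun _ => hg)).congr_deriv (add_comm _ _)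

theorem HasDerivAt.matrix_transpose {f : 𝕜 → Matrix m n 𝕜} {f' : Matrix m n 𝕜}
    (hf : HasDerivAt f f' x) : HasDerivAt (fun y => (f y)ᵀ) f'ᵀ x :=
  (LinearMap.toContinuousLinearMap
    (transposeLinearEquiv m n 𝕜 𝕜).toLinearMap).hasFDerivAt.comp_hasDerivAt x hf

end Calculus

namespace Matrix

variable {ι R : Type*} [Fintype ι] [DecidableEq ι] [CommRing R]

/-- Here `J ι R` is Mathlib's `[[0, -1], [1, 0]]`; replacing it by its negative changes neither
this condition nor `symplecticGroup ι R`. -/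
def IsHamiltonian (M : Matrix (ι ⊕ ι) (ι ⊕ ι) R) : Prop :=
  Mᵀ * J ι R + J ι R * M = 0

theorem isHamiltonian_fromBlocks (A : Matrix ι ι R) {S T : Matrix ι ι R} (hS : Sᵀ = S)
    (hT : Tᵀ = T) : (fromBlocks A S T (-Aᵀ)).IsHamiltonian := by
  simp [IsHamiltonian, J, fromBlocks_transpose, fromBlocks_multiply, fromBlocks_add, hS, hT]

end Matrix

section Flow

variable {𝕜 ι : Type*} [RCLike 𝕜] [Fintype ι] [DecidableEq ι]
  {Φ M : 𝕜 → Matrix (ι ⊕ ι) (ι ⊕ ι) 𝕜}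

theorem hasDerivAt_transpose_mul_J_mul {t : 𝕜} (hΦ : HasDerivAt Φ (M t * Φ t) t) :
    HasDerivAt (fun t => (Φ t)ᵀ * J ι 𝕜 * Φ t)
      ((Φ t)ᵀ * ((M t)ᵀ * J ι 𝕜 + J ι 𝕜 * M t) * Φ t) t := by
  convert (hΦ.matrix_transpose.matrix_mul (hasDerivAt_const t (J ι 𝕜))).matrix_mul hΦ using 1
  simp only [transpose_mul]
  noncomm_ring

theorem mem_symplecticGroup_of_hasDerivAt (hΦ : ∀ t, HasDerivAt Φ (M t * Φ t) t)
    (hM : ∀ t, (M t).IsHamiltonian) {s : 𝕜} (hΦs : Φ s = 1) (t : 𝕜) :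
    Φ t ∈ symplecticGroup ι 𝕜 := by
  have hderiv (t : 𝕜) : HasDerivAt (fun t => (Φ t)ᵀ * J ι 𝕜 * Φ t) 0 t := by
    simpa [show (M t)ᵀ * J ι 𝕜 + J ι 𝕜 * M t = 0 from hM t] using
      hasDerivAt_transpose_mul_J_mul (hΦ t)
  have hconst := is_const_of_deriv_eq_zero (fun t => (hderiv t).differentiableAt)
    (fun t => (hderiv t).deriv) t s
  rw [SymplecticGroup.mem_iff']
  simpa [hΦs] using hconst

end Flow

theorem symplecticBlocks_of_mem_symplecticGroup {n : ℕ}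
    {P : Matrix (Fin n ⊕ Fin n) (Fin n ⊕ Fin n) ℝ}    (hP : P ∈ symplecticGroup (Fin n) ℝ) :
    SymplecticBlocks P.toBlocks₁₁ P.toBlocks₁₂ P.toBlocks₂₁ P.toBlocks₂₂ := by
  have hPT := SymplecticGroup.transpose_mem hP
  rw [← fromBlocks_toBlocks P] at hP hPT
  rw [fromBlocks_transpose, SymplecticGroup.fromBlocks_mem_iff] at hPT
  rw [SymplecticGroup.fromBlocks_mem_iff] at hP
  obtain ⟨h₁₁₂₁, h₁₂₂₂, h₁₁₂₂⟩ := hP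
  obtain ⟨h₁₁₁₂, h₂₁₂₂, h₁₁₂₂'⟩ := hPT
  simp only [transpose_transpose] at h₁₁₁₂ h₂₁₂₂ h₁₁₂₂'
  exact ⟨h₁₁₂₂, sub_eq_zero.2 h₁₂₂₂, sub_eq_zero.2 h₁₁₂₁.symm, h₁₁₂₂',
    sub_eq_zero.2 h₁₁₁₂.symm, sub_eq_zero.2 h₂₁₂₂⟩

/-- the state transition kernel of the linear-quadratic Hamiltonian system
`M(t) = [[A, -BBᵀ], [-Q, -Aᵀ]]` has blocks satisfying the symplectic block identities. -/
theorem symplecticBlocks_of_hamiltonian_transition {n m : ℕ}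
    (A Q : ℝ → Matrix (Fin n) (Fin n) ℝ) (B : ℝ → Matrix (Fin n) (Fin m) ℝ)
    (hQ : ∀ t, (Q t)ᵀ = Q t)
    (Φ : ℝ → Matrix (Fin n ⊕ Fin n) (Fin n ⊕ Fin n) ℝ)
    (hΦ : ∀ t, HasDerivAt Φ
      (Matrix.fromBlocks (A t) (-(B t * (B t)ᵀ)) (-(Q t)) (-(A t)ᵀ) * Φ t) t)
    (s : ℝ) (hΦs : Φ s = 1) :
    ∀ t, SymplecticBlocks ((Φ t).toBlocks₁₁) ((Φ t).toBlocks₁₂)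
      ((Φ t).toBlocks₂₁) ((Φ t).toBlocks₂₂) := by
  have hM (t : ℝ) : (fromBlocks (A t) (-(B t * (B t)ᵀ)) (-(Q t)) (-(A t)ᵀ)).IsHamiltonian :=
    isHamiltonian_fromBlocks (A t) (by simp [transpose_mul]) (by simp [hQ t])
  exact fun t => symplecticBlocks_of_mem_symplecticGroup
    (mem_symplecticGroup_of_hasDerivAt hΦ hM hΦs t)
end

section
/- Let A, Q : ℝ → Matrix (Fin n) (Fin n) ℝ and B : ℝ → Matrix (Fin n) (Fin m) ℝ, and let X, Y : ℝ → Matrix (Fin n) (Fin n) ℝ satisfy, for every t in an open set U ⊆ ℝ, HasDerivAt X (A(t)·X(t) − B(t)·B(t)ᵀ·Y(t)) t and HasDerivAt Y (−Q(t)·X(t) − A(t)ᵀ·Y(t)) t, with X(t) invertible for all t ∈ U. Then the matrix fraction Π(t) := Y(t)·X(t)⁻¹ satisfies, for every t ∈ U, HasDerivAt Π (−(A(t)ᵀ·Π(t) + Π(t)·A(t) − Π(t)·B(t)·B(t)ᵀ·Π(t) + Q(t))) t; that is, Π solves the matrix Riccati differential equation −Π̇ = AᵀΠ + ΠA − ΠBBᵀΠ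 + Q. -/
open Matrix

/-! Differentiating `Π = Y X⁻¹` with the product rule and `(X⁻¹)' = -X⁻¹ Ẋ X⁻¹`, the Hamiltonian
equations turn `Π̇ = Ẏ X⁻¹ - Π Ẋ X⁻¹` into `-Q - AᵀΠ - Π A + Π B Bᵀ Π`. -/

open Filter Topology

namespace Matrix

variable {𝕜 : Type*} [NontriviallyNormedField 𝕜] {l m n : Type*} [Fintype l] [Fintype m]
  [Fintype n]

theorem _root_.HasDerivAt.matrix_mul_s5 [CompleteSpace 𝕜] {M : 𝕜 → Matrix l m 𝕜}
    {N : 𝕜 → Matrix m n 𝕜} {M' : Matrix l m 𝕜} {N' : Matrix m n 𝕜} {t : 𝕜}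
    (hM : HasDerivAt M M' t) (hN : HasDerivAt N N' t) :
    HasDerivAt (fun s => M s * N s) (M' * N t + M t * N') t := by
  let B : Matrix l m 𝕜 →L[𝕜] Matrix m n 𝕜 →L[𝕜] Matrix l n 𝕜 :=
    LinearMap.toContinuousLinearMap
      (LinearMap.toContinuousLinearMap.toLinearMap ∘ₗ mulLinearMap 𝕜)
  rw [add_comm]
  exact B.hasDerivAt_of_bilinear (fun _ => hM) (fun _ => hN)

variable [DecidableEq n]

theorem _root_.HasDerivAt.matrix_inv {X : 𝕜 → Matrix n n 𝕜} {X' : Matrix n n 𝕜} {t : 𝕜}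
    (hX : HasDerivAt X X' t) (ht : IsUnit (X t)) :
    HasDerivAt (fun s => (X s)⁻¹) (-((X t)⁻¹ * X' * (X t)⁻¹)) t := by
  have hdet : (X t).det ≠ 0 := ((isUnit_iff_isUnit_det _).1 ht).ne_zero
  have hinv_cont : ContinuousAt (fun s => (X s)⁻¹) t := by
    refine (continuousAt_matrix_inv _ ?_).comp hX.continuousAt
    rw [Ring.inverse_eq_inv']
    exact continuousAt_inv₀ hdet
  have hunit : ∀ᶠ s in 𝓝 t, IsUnit (X s) :=
    ((continuous_id.matrix_det.continuousAt.comp hX.continuousAt).eventually_ne hdet).mono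
      fun s hs => (isUnit_iff_isUnit_det _).2 (isUnit_iff_ne_zero.2 hs)
  -- resolvent identity `X(s)⁻¹ - X(t)⁻¹ = X(s)⁻¹ (X(t) - X(s)) X(t)⁻¹`, once `X s` is invertible
  have hslope : ∀ᶠ s in 𝓝[≠] t,
      -((X s)⁻¹ * slope X t s * (X t)⁻¹) = slope (fun s => (X s)⁻¹) t s := by
    refine (hunit.filter_mono nhdsWithin_le_nhds).mono fun s hs => ?_
    rw [slope_def_module, slope_def_module, inv_sub_inv (iff_of_true hs ht), ← neg_sub (X t)]
    simp only [Matrix.mul_smul, Matrix.smul_mul, Matrix.mul_neg, Matrix.neg_mul, smul_neg, neg_neg]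
  refine hasDerivAt_iff_tendsto_slope.2 (Tendsto.congr' hslope ?_)
  exact (((hinv_cont.tendsto.mono_left nhdsWithin_le_nhds).mul
    (hasDerivAt_iff_tendsto_slope.1 hX)).mul_const _).neg

end Matrix

theorem riccati_of_hamiltonian_general {n m : ℕ}
    (A Q : ℝ → Matrix (Fin n) (Fin n) ℝ) (B : ℝ → Matrix (Fin n) (Fin m) ℝ)
    (X Y : ℝ → Matrix (Fin n) (Fin n) ℝ)
    (U : Set ℝ)
    (hX : ∀ t ∈ U, HasDerivAt X (A t * X t - B t * (B t)ᵀ * Y t) t)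
    (hY : ∀ t ∈ U, HasDerivAt Y (-(Q t) * X t - (A t)ᵀ * Y t) t)
    (hXinv : ∀ t ∈ U, IsUnit (X t)) :
    ∀ t ∈ U, HasDerivAt (fun t => Y t * (X t)⁻¹)
      (-((A t)ᵀ * (Y t * (X t)⁻¹) + (Y t * (X t)⁻¹) * A t
        - (Y t * (X t)⁻¹) * B t * (B t)ᵀ * (Y t * (X t)⁻¹) + Q t)) t := by
  intro t ht
  have hXX : X t * (X t)⁻¹ = 1 := mul_nonsing_inv _ ((isUnit_iff_isUnit_det _).1 (hXinv t ht))
  convert (hY t ht).matrix_mul_s5 ((hX t ht).matrix_inv (hXinv t ht)) using 1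
  simp only [Matrix.mul_assoc, Matrix.sub_mul, Matrix.mul_sub, Matrix.neg_mul, Matrix.mul_neg,
    hXX, Matrix.mul_one]
  abel

/-- if `(X, Y)` solves the linear Hamiltonian system
`Ẋ = AX − BBᵀY`, `Ẏ = −QX − AᵀY` on an open set `U` with `X(t)` invertible on `U`,
then `Π := Y X⁻¹` solves the matrix Riccati equation `−Π̇ = AᵀΠ + ΠA − ΠBBᵀΠ + Q` on `U`. -/
theorem riccati_of_hamiltonian {n m : ℕ}
    (A Q : ℝ → Matrix (Fin n) (Fin n) ℝ) (B : ℝ → Matrix (Fin n) (Fin m) ℝ)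
    (X Y : ℝ → Matrix (Fin n) (Fin n) ℝ)
    (U : Set ℝ) (hU : IsOpen U)
    (hX : ∀ t ∈ U, HasDerivAt X (A t * X t - B t * (B t)ᵀ * Y t) t)
    (hY : ∀ t ∈ U, HasDerivAt Y (-(Q t) * X t - (A t)ᵀ * Y t) t)
    (hXinv : ∀ t ∈ U, IsUnit (X t)) :
    ∀ t ∈ U, HasDerivAt (fun t => Y t * (X t)⁻¹)
      (-((A t)ᵀ * (Y t * (X t)⁻¹) + (Y t * (X t)⁻¹) * A t
        - (Y t * (X t)⁻¹) * B t * (B t)ᵀ * (Y t * (X t)⁻¹) + Q t)) t :=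
  riccati_of_hamiltonian_general A Q B X Y U hX hY hXinv
end

section
/- Let A, Q : ℝ → Matrix (Fin n) (Fin n) ℝ and B : ℝ → Matrix (Fin n) (Fin m) ℝ. Suppose on an open set U ⊆ ℝ: (a) Π : ℝ → Matrix (Fin n) (Fin n) ℝ is symmetric-valued and satisfies HasDerivAt Π (−(A(t)ᵀΠ(t) + Π(t)A(t) − Π(t)B(t)B(t)ᵀΠ(t) + Q(t))) t for all t ∈ U; (b) Σ : ℝ → Matrix (Fin n) (Fin n) ℝ is symmetric-valued, invertible for all t ∈ U, and satisfies the closed-loop Lyapunov equation HasDerivAt Σ ((A(t) − B(t)B(t)ᵀΠ(t))·Σ(t) + Σ(t)·(A(t) − B(t)B(t)ᵀΠ(t))ᵀ + B(t)B(t)ᵀ) t for all t ∈ U. Then H(t) := Σ(t)⁻¹ − Π(t) satisfies, for every t ∈ U, HasDerivAt H (−(A(t)ᵀH(t) + H(t)A(t) + H(t)B(t)B(t)ᵀH(t) − Q(t))) t. -/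
/-!
Differentiating `Σ Σ⁻¹ = 1` gives `(Σ⁻¹)' = -Σ⁻¹ Σ' Σ⁻¹`. Substituting the closed-loop Lyapunov
equation, the conjugation by `Σ⁻¹` cancels the `Σ` factors:
`Σ⁻¹ Σ' Σ⁻¹ = Σ⁻¹ (A - BBᵀΠ) + (A - BBᵀΠ)ᵀ Σ⁻¹ + Σ⁻¹ BBᵀ Σ⁻¹`, and subtracting the Riccati
equation for `Π` leaves a noncommutative ring identity in `H = Σ⁻¹ - Π`.
-/

open Matrix

theorem HasDerivAt.ringInverse {𝕜 R : Type*} [NontriviallyNormedField 𝕜] [NormedRing R]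
    [NormedAlgebra 𝕜 R] [HasSummableGeomSeries R] {f : 𝕜 → R} {f' : R} {t : 𝕜}
    (hf : HasDerivAt f f' t) (ht : IsUnit (f t)) :
    HasDerivAt (fun s => Ring.inverse (f s))
      (-(Ring.inverse (f t) * f' * Ring.inverse (f t))) t := by
  obtain ⟨u, hu⟩ := ht
  have hinv := hasFDerivAt_ringInverse (𝕜 := 𝕜) u
  rw [hu] at hinv
  rw [← hu, Ring.inverse_unit]
  exact hinv.comp_hasDerivAt t hf

section

-- `HasDerivAt` only sees the topology, which every matrix norm induces, so any normed-ring
-- structure on square matrices may be used to differentiate the inverse.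
attribute [local instance] Matrix.linftyOpNormedRing Matrix.linftyOpNormedAlgebra

theorem Matrix.hasDerivAt_inv {𝕜 ι : Type*} [NontriviallyNormedField 𝕜] [CompleteSpace 𝕜]
    [Fintype ι] [DecidableEq ι] {f : 𝕜 → Matrix ι ι 𝕜} {f' : Matrix ι ι 𝕜} {t : 𝕜}
    (hf : HasDerivAt f f' t) (ht : IsUnit (f t)) :
    HasDerivAt (fun s => (f s)⁻¹) (-((f t)⁻¹ * f' * (f t)⁻¹)) t := by
  -- Instance search does not unfold the `linftyOp` uniformity to the product one.
  have : HasSummableGeomSeries (Matrix ι ι 𝕜) :=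
    @instHasSummableGeomSeriesOfCompleteSpace _ _ (FiniteDimensional.complete 𝕜 _)
  simp only [Matrix.nonsing_inv_eq_ringInverse]
  exact hf.ringInverse ht

end

theorem riccati_of_lyapunov_algebraic {R : Type*} [Ring R] {S K : R}
    (hKS : K * S = 1) (hSK : S * K = 1) (A A' G P Q : R) :
    -(K * ((A - G * P) * S + S * (A' - P * G) + G) * K) - -(A' * P + P * A - P * G * P + Q)
      = -(A' * (K - P) + (K - P) * A + (K - P) * G * (K - P) - Q) := by
  have hconj : K * ((A - G * P) * S + S * (A' - P * G) + G) * K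
      = K * (A - G * P) + (A' - P * G) * K + K * G * K :=
    calc K * ((A - G * P) * S + S * (A' - P * G) + G) * K
        = K * (A - G * P) * (S * K) + (K * S) * (A' - P * G) * K + K * G * K := by
          noncomm_ring
      _ = K * (A - G * P) + (A' - P * G) * K + K * G * K := by
          rw [hKS, hSK, mul_one, one_mul]
  rw [hconj]
  noncomm_ring

theorem riccati_H_of_lyapunov_general {n m : ℕ}
    (A Q : ℝ → Matrix (Fin n) (Fin n) ℝ) (B : ℝ → Matrix (Fin n) (Fin m) ℝ)
    (P S : ℝ → Matrix (Fin n) (Fin n) ℝ)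
    (U : Set ℝ)
    (hPsymm : ∀ t ∈ U, (P t)ᵀ = P t)
    (hP : ∀ t ∈ U, HasDerivAt P
      (-((A t)ᵀ * P t + P t * A t - P t * (B t * (B t)ᵀ) * P t + Q t)) t)
    (hSinv : ∀ t ∈ U, IsUnit (S t))
    (hS : ∀ t ∈ U, HasDerivAt S
      ((A t - B t * (B t)ᵀ * P t) * S t + S t * (A t - B t * (B t)ᵀ * P t)ᵀ
        + B t * (B t)ᵀ) t) :
    ∀ t ∈ U, HasDerivAt (fun t => (S t)⁻¹ - P t)
      (-((A t)ᵀ * ((S t)⁻¹ - P t) + ((S t)⁻¹ - P t) * A t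
        + ((S t)⁻¹ - P t) * (B t * (B t)ᵀ) * ((S t)⁻¹ - P t) - Q t)) t := by
  intro t ht
  have hdet : IsUnit (S t).det := (isUnit_iff_isUnit_det _).mp (hSinv t ht)
  have hclosedLoop : (A t - B t * (B t)ᵀ * P t)ᵀ = (A t)ᵀ - P t * (B t * (B t)ᵀ) := by
    rw [transpose_sub, transpose_mul, transpose_mul, transpose_transpose, hPsymm t ht]
  refine ((Matrix.hasDerivAt_inv (hS t ht) (hSinv t ht)).sub (hP t ht)).congr_deriv ?_
  rw [hclosedLoop]
  exact riccati_of_lyapunov_algebraic (nonsing_inv_mul _ hdet) (mul_nonsing_inv _ hdet) _ _ _ _ _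

/-- if `Π` solves the control Riccati equation and `Σ` solves the
closed-loop Lyapunov equation on an open set `U`, with `Σ(t)` symmetric and invertible,
then `H := Σ⁻¹ − Π` solves the Riccati equation `−Ḣ = AᵀH + HA + HBBᵀH − Q` on `U`. -/
theorem riccati_H_of_lyapunov {n m : ℕ}
    (A Q : ℝ → Matrix (Fin n) (Fin n) ℝ) (B : ℝ → Matrix (Fin n) (Fin m) ℝ)
    (P S : ℝ → Matrix (Fin n) (Fin n) ℝ)
    (U : Set ℝ) (hU : IsOpen U)
    (hPsymm : ∀ t ∈ U, (P t)ᵀ = P t)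
    (hP : ∀ t ∈ U, HasDerivAt P
      (-((A t)ᵀ * P t + P t * A t - P t * (B t * (B t)ᵀ) * P t + Q t)) t)
    (hSsymm : ∀ t ∈ U, (S t)ᵀ = S t)
    (hSinv : ∀ t ∈ U, IsUnit (S t))
    (hS : ∀ t ∈ U, HasDerivAt S
      ((A t - B t * (B t)ᵀ * P t) * S t + S t * (A t - B t * (B t)ᵀ * P t)ᵀ
        + B t * (B t)ᵀ) t) :
    ∀ t ∈ U, HasDerivAt (fun t => (S t)⁻¹ - P t)
      (-((A t)ᵀ * ((S t)⁻¹ - P t) + ((S t)⁻¹ - P t) * A t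
        + ((S t)⁻¹ - P t) * (B t * (B t)ᵀ) * ((S t)⁻¹ - P t) - Q t)) t :=
  riccati_H_of_lyapunov_general A Q B P S U hPsymm hP hSinv hS
end

section
/- Let Σ₀ and Σ_T be positive definite n×n real matrices, Φ₁₂ an invertible n×n real matrix, Φ₁₁ an arbitrary n×n real matrix, and ε > 0. Let Σ₀^{1/2} denote the positive semidefinite square root of Σ₀ and Σ₀^{−1/2} its inverse, and let D := Σ₀^{−1/2}·( (ε²/4)·I + Σ₀^{1/2}·Φ₁₂⁻¹·Σ_T·(Φ₁₂ᵀ)⁻¹·Σ₀^{1/2} )^{1/2}·Σ₀^{−1/2}, where the inner square root is the positive semidefinite square root of the indicated positive definite matrix. Then both Z₊ := D − Φ₁₂⁻¹Φ₁₁ and Z₋ := −D − Φ₁₂⁻¹Φ₁₁ satisfy the quadratic matrix equation (Φ₁₁ + Φ₁₂·(Z − (ε/2)·Σ₀⁻¹))ᵀ · Σ_T⁻¹ · (Φ₁₁ + Φ₁₂·(Z + (ε/2)·Σ₀⁻¹)) = Σ₀⁻¹. -/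
/-!
Write `S = Σ₀^{1/2}`, `c = ε/2` and `P = S Φ₁₂⁻¹ Σ_T Φ₁₂⁻ᵀ S`. For `Z = S⁻¹ E S⁻¹ − Φ₁₂⁻¹ Φ₁₁` the two
factors become `Φ₁₂ S⁻¹ (E ∓ c) S⁻¹`, so for symmetric `E` the left-hand side is
`S⁻¹ (E − c) P⁻¹ (E + c) S⁻¹`. Both `E = ±(c² + P)^{1/2}` satisfy `(E + c)(E − c) = E² − c² = P`,
hence `(E − c) P⁻¹ (E + c) = 1` (a one-sided inverse of a square matrix is two-sided), and the
left-hand side is `S⁻² = Σ₀⁻¹`.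
-/

open Matrix

namespace Matrix.PosSemidef

open scoped ComplexOrder

/-- The positive semidefinite square root, as defined in Mathlib of December 2024
(removed since then). -/
noncomputable def sqrt {n 𝕜 : Type*} [Fintype n] [RCLike 𝕜] [DecidableEq n] {A : Matrix n n 𝕜}
    (hA : PosSemidef A) : Matrix n n 𝕜 :=
  hA.1.eigenvectorUnitary.1 * diagonal ((↑) ∘ (Real.sqrt ∘ hA.1.eigenvalues)) *
  (star hA.1.eigenvectorUnitary : Matrix n n 𝕜)

end Matrix.PosSemidef

namespace Matrix.PosSemidef

open scoped ComplexOrder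

variable {n 𝕜 : Type*} [Fintype n] [RCLike 𝕜] [DecidableEq n] {A : Matrix n n 𝕜}

theorem sqrt_mul_self (hA : PosSemidef A) : hA.sqrt * hA.sqrt = A := by
  set U : Matrix n n 𝕜 := hA.1.eigenvectorUnitary.1
  set D : Matrix n n 𝕜 := diagonal ((↑) ∘ (Real.sqrt ∘ hA.1.eigenvalues))
  have hUU : star U * U = 1 := Matrix.mem_unitaryGroup_iff'.mp hA.1.eigenvectorUnitary.2
  have hDD : D * D = diagonal ((↑) ∘ hA.1.eigenvalues) := by
    rw [diagonal_mul_diagonal]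
    congr 1
    funext i
    simp only [Function.comp_apply]
    rw [← RCLike.ofReal_mul, Real.mul_self_sqrt (hA.eigenvalues_nonneg i)]
  have hspec := hA.1.spectral_theorem
  rw [Unitary.conjStarAlgAut_apply] at hspec
  calc hA.sqrt * hA.sqrt = U * (D * (star U * U) * D) * star U := by
        simp only [sqrt, U, D, Matrix.mul_assoc]
    _ = A := by rw [hUU, Matrix.mul_one, hDD]; exact hspec.symm

theorem posSemidef_sqrt (hA : PosSemidef A) : hA.sqrt.PosSemidef := by
  have hD : (diagonal ((↑) ∘ (Real.sqrt ∘ hA.1.eigenvalues)) : Matrix n n 𝕜).PosSemidef :=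
    posSemidef_diagonal_iff.mpr fun _ => RCLike.ofReal_nonneg.mpr (Real.sqrt_nonneg _)
  have h := hD.mul_mul_conjTranspose_same (hA.1.eigenvectorUnitary : Matrix n n 𝕜)
  rwa [← star_eq_conjTranspose] at h

end Matrix.PosSemidef

theorem Matrix.PosSemidef.transpose_sqrt {n : Type*} [Fintype n] [DecidableEq n]
    {A : Matrix n n ℝ} (hA : A.PosSemidef) : hA.sqrtᵀ = hA.sqrt :=
  isHermitian_iff_isSymm.mp hA.posSemidef_sqrt.isHermitian

theorem Matrix.PosDef.isUnit_sqrt {n : Type*} [Fintype n] [DecidableEq n]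
    {A : Matrix n n ℝ} (hA : A.PosDef) : IsUnit hA.posSemidef.sqrt := by
  have h : IsUnit (hA.posSemidef.sqrt * hA.posSemidef.sqrt) := by
    rw [hA.posSemidef.sqrt_mul_self]; exact hA.isUnit
  exact ((Commute.refl _).isUnit_mul_iff.mp h).1

section

variable {ι K : Type*} [Fintype ι] [DecidableEq ι] [CommRing K]

theorem Matrix.mul_nonsing_inv_mul_eq_one {A B P : Matrix ι ι K} (hP : IsUnit P)
    (hBA : B * A = P) : A * P⁻¹ * B = 1 := by
  rw [Matrix.mul_assoc]
  refine mul_eq_one_comm.mp ?_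
  rw [Matrix.mul_assoc, hBA, nonsing_inv_mul _ ((isUnit_iff_isUnit_det P).mp hP)]

theorem quadratic_matrix_equation_of_mul_self_eq
    {S S0 ST Φ11 Φ12 E Z : Matrix ι ι K} (c : K)
    (hSsymm : Sᵀ = S) (hS : IsUnit S) (hSS : S * S = S0) (hST : IsUnit ST) (hΦ12 : IsUnit Φ12)
    (hEsymm : Eᵀ = E) (hE : E * E = c ^ 2 • 1 + S * Φ12⁻¹ * ST * Φ12ᵀ⁻¹ * S)
    (hZ : Z = S⁻¹ * E * S⁻¹ - Φ12⁻¹ * Φ11) :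
    (Φ11 + Φ12 * (Z - c • S0⁻¹))ᵀ * ST⁻¹ * (Φ11 + Φ12 * (Z + c • S0⁻¹)) = S0⁻¹ := by
  subst hSS hZ
  set P := S * Φ12⁻¹ * ST * Φ12ᵀ⁻¹ * S
  have hP : IsUnit P := by
    have hΦ12T : IsUnit Φ12ᵀ := (isUnit_transpose Φ12).mpr hΦ12
    exact (((hS.mul (isUnit_nonsing_inv_iff.mpr hΦ12)).mul hST).mul
      (isUnit_nonsing_inv_iff.mpr hΦ12T)).mul hS
  have hPinv : P⁻¹ = S⁻¹ * Φ12ᵀ * ST⁻¹ * Φ12 * S⁻¹ := by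
    simp only [P, Matrix.mul_inv_rev, Matrix.mul_assoc,
      nonsing_inv_nonsing_inv _ ((isUnit_iff_isUnit_det _).mp hΦ12),
      nonsing_inv_nonsing_inv _ ((isUnit_iff_isUnit_det _).mp ((isUnit_transpose Φ12).mpr hΦ12))]
  have hfactor : ∀ d : K, Φ11 + Φ12 * (S⁻¹ * E * S⁻¹ - Φ12⁻¹ * Φ11 + d • (S * S)⁻¹) =
      Φ12 * (S⁻¹ * (E + d • 1) * S⁻¹) := by
    intro d
    simp only [Matrix.mul_inv_rev, Matrix.mul_add, Matrix.add_mul, Matrix.mul_sub,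
      Matrix.mul_smul, Matrix.smul_mul, Matrix.mul_one, Matrix.mul_assoc,
      mul_nonsing_inv_cancel_left _ _ ((isUnit_iff_isUnit_det _).mp hΦ12)]
    abel
  have hroot : (E - c • 1) * P⁻¹ * (E + c • 1) = 1 := by
    refine mul_nonsing_inv_mul_eq_one hP ?_
    rw [← ((Commute.one_right E).smul_right c).mul_self_sub_mul_self_eq, hE]
    simp only [smul_mul_smul, Matrix.one_mul, sq]
    abel
  rw [sub_eq_add_neg, ← neg_smul, hfactor, hfactor, neg_smul, ← sub_eq_add_neg]
  calc (Φ12 * (S⁻¹ * (E - c • 1) * S⁻¹))ᵀ * ST⁻¹ * (Φ12 * (S⁻¹ * (E + c • 1) * S⁻¹))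
      = S⁻¹ * ((E - c • 1) * P⁻¹ * (E + c • 1)) * S⁻¹ := by
        simp only [hPinv, transpose_mul, transpose_sub, transpose_smul, transpose_one,
          transpose_nonsing_inv, hSsymm, hEsymm, Matrix.mul_assoc]
    _ = (S * S)⁻¹ := by rw [hroot, Matrix.mul_one, Matrix.mul_inv_rev]

end

theorem quadratic_matrix_equation_roots_general {n : ℕ}
    (S0 ST Φ11 Φ12 : Matrix (Fin n) (Fin n) ℝ) (ε : ℝ)
    (hS0 : S0.PosDef) (hST : ST.PosDef) (hΦ12 : IsUnit Φ12)
    (hM : ((ε ^ 2 / 4) • (1 : Matrix (Fin n) (Fin n) ℝ) +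
      hS0.posSemidef.sqrt * Φ12⁻¹ * ST * (Φ12ᵀ)⁻¹ * hS0.posSemidef.sqrt).PosSemidef) :
    ∀ Z : Matrix (Fin n) (Fin n) ℝ,
      (Z = (hS0.posSemidef.sqrt)⁻¹ * hM.sqrt * (hS0.posSemidef.sqrt)⁻¹ - Φ12⁻¹ * Φ11 ∨
       Z = -((hS0.posSemidef.sqrt)⁻¹ * hM.sqrt * (hS0.posSemidef.sqrt)⁻¹) - Φ12⁻¹ * Φ11) →
      (Φ11 + Φ12 * (Z - (ε / 2) • S0⁻¹))ᵀ * ST⁻¹ *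
        (Φ11 + Φ12 * (Z + (ε / 2) • S0⁻¹)) = S0⁻¹ := by
  intro Z hZ
  have hRsymm := hM.transpose_sqrt
  have hR : hM.sqrt * hM.sqrt = (ε / 2) ^ 2 • 1 +
      hS0.posSemidef.sqrt * Φ12⁻¹ * ST * Φ12ᵀ⁻¹ * hS0.posSemidef.sqrt := by
    rw [hM.sqrt_mul_self, div_pow, show (2 : ℝ) ^ 2 = 4 by norm_num]
  rcases hZ with hZ | hZ
  · exact quadratic_matrix_equation_of_mul_self_eq (ε / 2) hS0.posSemidef.transpose_sqrt
      hS0.isUnit_sqrt hS0.posSemidef.sqrt_mul_self hST.isUnit hΦ12 hRsymm hR hZ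
  · refine quadratic_matrix_equation_of_mul_self_eq (E := -hM.sqrt) (ε / 2)
      hS0.posSemidef.transpose_sqrt hS0.isUnit_sqrt hS0.posSemidef.sqrt_mul_self hST.isUnit hΦ12
      (by rw [transpose_neg, hRsymm]) (by rw [neg_mul_neg, hR]) ?_
    rw [hZ, Matrix.mul_neg, Matrix.neg_mul]

/-- both roots `Z₊ = D − Φ₁₂⁻¹Φ₁₁` and `Z₋ = −D − Φ₁₂⁻¹Φ₁₁`, where
`D = S0^{-1/2} ((ε²/4)I + S0^{1/2} Φ₁₂⁻¹ Σ_T (Φ₁₂ᵀ)⁻¹ S0^{1/2})^{1/2} S0^{-1/2}`,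
solve the quadratic matrix equation
`(Φ₁₁ + Φ₁₂(Z − (ε/2)S0⁻¹))ᵀ Σ_T⁻¹ (Φ₁₁ + Φ₁₂(Z + (ε/2)S0⁻¹)) = S0⁻¹`. -/
theorem quadratic_matrix_equation_roots {n : ℕ}
    (S0 ST Φ11 Φ12 : Matrix (Fin n) (Fin n) ℝ) (ε : ℝ) (hε : 0 < ε)
    (hS0 : S0.PosDef) (hST : ST.PosDef) (hΦ12 : IsUnit Φ12)
    (hM : ((ε ^ 2 / 4) • (1 : Matrix (Fin n) (Fin n) ℝ) +
      hS0.posSemidef.sqrt * Φ12⁻¹ * ST * (Φ12ᵀ)⁻¹ * hS0.posSemidef.sqrt).PosSemidef) :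
    ∀ Z : Matrix (Fin n) (Fin n) ℝ,
      (Z = (hS0.posSemidef.sqrt)⁻¹ * hM.sqrt * (hS0.posSemidef.sqrt)⁻¹ - Φ12⁻¹ * Φ11 ∨
       Z = -((hS0.posSemidef.sqrt)⁻¹ * hM.sqrt * (hS0.posSemidef.sqrt)⁻¹) - Φ12⁻¹ * Φ11) →
      (Φ11 + Φ12 * (Z - (ε / 2) • S0⁻¹))ᵀ * ST⁻¹ *
        (Φ11 + Φ12 * (Z + (ε / 2) • S0⁻¹)) = S0⁻¹ :=
  quadratic_matrix_equation_roots_general S0 ST Φ11 Φ12 ε hS0 hST hΦ12 hM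
end

section
/- Let Σ⁺ and S be invertible n×n real matrices with S symmetric, let Φ, W, Σ_T be n×n real matrices, and let ε be a nonzero real number. Then the trace of the 2n×2n product [[ (Σ⁺)⁻¹ + ε⁻¹·Φᵀ·S⁻¹·Φ, −ε⁻¹·Φᵀ·S⁻¹ ],[ −ε⁻¹·S⁻¹·Φ, ε⁻¹·S⁻¹ ]] · [[ Σ⁺, Wᵀ ],[ W, Σ_T ]] equals n + ε⁻¹·( trace(Φᵀ·S⁻¹·Φ·Σ⁺) − 2·trace(Φᵀ·S⁻¹·W) + trace(S⁻¹·Σ_T) ). In particular, the result contains no occurrence of (Σ⁺)⁻¹. -/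
open Matrix

/-- the trace of the product of the prior joint-covariance inverse with the
controlled joint covariance contains no occurrence of `(Σ⁺)⁻¹`:
`trace = n + ε⁻¹ (tr(Φᵀ S⁻¹ Φ Σ⁺) − 2 tr(Φᵀ S⁻¹ W) + tr(S⁻¹ Σ_T))`. -/
theorem joint_covariance_trace_cancellation {n : ℕ}
    (Sp G Φ W ST : Matrix (Fin n) (Fin n) ℝ) (ε : ℝ)
    (hSp : IsUnit Sp) (hG : IsUnit G) (hGsymm : Gᵀ = G) (hε : ε ≠ 0) :
    (Matrix.fromBlocks (Sp⁻¹ + ε⁻¹ • (Φᵀ * G⁻¹ * Φ)) (-(ε⁻¹ • (Φᵀ * G⁻¹)))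
        (-(ε⁻¹ • (G⁻¹ * Φ))) (ε⁻¹ • G⁻¹) *
      Matrix.fromBlocks Sp Wᵀ W ST).trace
    = (n : ℝ) + ε⁻¹ * ((Φᵀ * G⁻¹ * Φ * Sp).trace - 2 * (Φᵀ * G⁻¹ * W).trace
        + (G⁻¹ * ST).trace) := by
  have hSpinv : Sp⁻¹ * Sp = 1 := Matrix.nonsing_inv_mul Sp (Matrix.isUnit_iff_isUnit_det Sp |>.mp hSp)
  have hGinvT : G⁻¹ᵀ = G⁻¹ := by rw [Matrix.transpose_nonsing_inv, hGsymm]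
  have hcross : (G⁻¹ * Φ * Wᵀ).trace = (Φᵀ * G⁻¹ * W).trace := by
    rw [← Matrix.trace_transpose (G⁻¹ * Φ * Wᵀ)]
    simp only [Matrix.transpose_mul, Matrix.transpose_transpose, hGinvT]
    rw [Matrix.trace_mul_comm]
  have htfb : ∀ (A B C D : Matrix (Fin n) (Fin n) ℝ),
      (Matrix.fromBlocks A B C D).trace = A.trace + D.trace := by
    intro A B C D
    simp [Matrix.trace, Matrix.diag, Fintype.sum_sum_type, Matrix.fromBlocks]
  rw [Matrix.fromBlocks_multiply, htfb]
  simp only [add_mul, neg_mul, Matrix.smul_mul, Matrix.trace_add, Matrix.trace_neg,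
    Matrix.trace_smul, hSpinv, Matrix.trace_one, Fintype.card_fin, smul_eq_mul]
  rw [show Φᵀ * G⁻¹ * Φ * Sp = Φᵀ * G⁻¹ * Φ * Sp from rfl]
  have : (G⁻¹ * Φ * Wᵀ).trace = (Φᵀ * G⁻¹ * W).trace := hcross
  rw [mul_assoc (Φᵀ * G⁻¹) Φ Sp] at *
  rw [this]
  ring
end

section
/- Fix positive definite real matrices Σ₀, S₁ of size n₁×n₁ and Σ_T, S₂ of size n₂×n₂, real matrices Φ₁ (n₁×n₁) and Φ₂ (n₂×n₂), and ε > 0. Define Σ*₁ := [[Σ₀, Σ₀Φ₁ᵀ],[Φ₁Σ₀, Φ₁Σ₀Φ₁ᵀ + εS₁]] and, for a positive definite n₂×n₂ matrix Σ⁺, Σ*₂(Σ⁺) := [[Σ⁺, Σ⁺Φ₂ᵀ],[Φ₂Σ⁺, Φ₂Σ⁺Φ₂ᵀ + εS₂]]. Then there exists a constant c ∈ ℝ (depending only on Σ₀, Σ_T, Φ₁, Φ₂, S₁, S₂, ε, n₁, n₂) such that for all n₁×n₁ matrices W₁, n₂×n₂ matrices W₂, positive definite Σ⁻ (n₁×n₁)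 and positive definite Σ⁺ (n₂×n₂) for which Σ₁ := [[Σ₀, W₁ᵀ],[W₁, Σ⁻]] and Σ₂ := [[Σ⁺, W₂ᵀ],[W₂, Σ_T]] are positive definite, the quantity Σ_{j=1,2} [ log det Σ*ⱼ − log det Σⱼ + trace((Σ*ⱼ)⁻¹ Σⱼ) ] equals (1/ε)·trace(S₁⁻¹Σ⁻) − log det(Σ_T − W₂(Σ⁺)⁻¹W₂ᵀ) − (2/ε)·trace(Φ₁ᵀS₁⁻¹W₁) + (1/ε)·trace(Φ₂ᵀS₂⁻¹Φ₂Σ⁺) − log det(Σ⁻ − W₁Σ₀⁻¹W₁ᵀ) − (2/ε)·trace(Φ₂ᵀS₂⁻¹W₂) + c. -/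
open Matrix

lemma trace_fromBlocks' {m n R : Type*} [Fintype m] [Fintype n] [AddCommMonoid R]
    (A : Matrix m m R) (B : Matrix m n R) (C : Matrix n m R) (D : Matrix n n R) :
    (fromBlocks A B C D).trace = A.trace + D.trace := by
  simp [Matrix.trace, Matrix.diag, Fintype.sum_sum_type, fromBlocks]

lemma key {n : ℕ} (A G Φ W Sm : Matrix (Fin n) (Fin n) ℝ) (ε : ℝ) (hε : 0 < ε)
    (hA : A.PosDef) (hG : G.PosDef)
    (hblk : (fromBlocks A Wᵀ W Sm).PosDef) :
    Real.log (fromBlocks A (A*Φᵀ) (Φ*A) (Φ*A*Φᵀ + ε•G)).det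
      - Real.log (fromBlocks A Wᵀ W Sm).det
      + ((fromBlocks A (A*Φᵀ) (Φ*A) (Φ*A*Φᵀ + ε•G))⁻¹ * fromBlocks A Wᵀ W Sm).trace
    = (1/ε) * (G⁻¹ * Sm).trace - Real.log (Sm - W*A⁻¹*Wᵀ).det - (2/ε)*(Φᵀ*G⁻¹*W).trace
      + ((1/ε) * (Φᵀ*G⁻¹*Φ*A).trace + Real.log ((ε•G : Matrix (Fin n) (Fin n) ℝ).det) + n) := by
  have hεu : IsUnit ε := (ne_of_gt hε).isUnit
  have hεi : Invertible ε := hεu.invertible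
  have hGdet : IsUnit G.det := hG.det_pos.ne'.isUnit
  have hAdet : IsUnit A.det := hA.det_pos.ne'.isUnit
  have hDdet : IsUnit (ε • G : Matrix (Fin n) (Fin n) ℝ).det := by
    rw [Matrix.det_smul, Fintype.card_fin]
    exact (hεu.pow n).mul hGdet
  set D : Matrix (Fin n) (Fin n) ℝ := ε • G with hDdef
  have hGinvG : G⁻¹ * G = 1 := Matrix.nonsing_inv_mul G hGdet
  have hDinv : D⁻¹ = ε⁻¹ • G⁻¹ := by
    refine Matrix.inv_eq_left_inv ?_
    rw [hDdef, Matrix.smul_mul, Matrix.mul_smul, smul_smul, inv_mul_cancel₀ hε.ne',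
      one_smul, hGinvG]
  have hGsym : Gᵀ = G := hG.1
  have hDsym : Dᵀ = D := by rw [hDdef, Matrix.transpose_smul, hGsym]
  have hAinv : A * A⁻¹ = 1 := Matrix.mul_nonsing_inv A hAdet
  have hAinv' : A⁻¹ * A = 1 := Matrix.nonsing_inv_mul A hAdet
  have hDinvD : D * D⁻¹ = 1 := Matrix.mul_nonsing_inv D hDdet
  have hDDinv : D⁻¹ * D = 1 := Matrix.nonsing_inv_mul D hDdet
  have hAi : Invertible A := A.invertibleOfIsUnitDet hAdet
  -- the explicit inverse of the prior joint covariance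
  have hMinv : (fromBlocks A (A*Φᵀ) (Φ*A) (Φ*A*Φᵀ + D))⁻¹
      = fromBlocks (A⁻¹ + Φᵀ*D⁻¹*Φ) (-(Φᵀ*D⁻¹)) (-(D⁻¹*Φ)) D⁻¹ := by
    apply Matrix.inv_eq_right_inv
    rw [Matrix.fromBlocks_multiply]
    have b11 : A * (A⁻¹ + Φᵀ*D⁻¹*Φ) + (A*Φᵀ) * (-(D⁻¹*Φ)) = 1 := by
      rw [Matrix.mul_add, hAinv]
      simp only [Matrix.mul_neg, Matrix.mul_assoc]
      abel
    have b12 : A * (-(Φᵀ*D⁻¹)) + (A*Φᵀ) * D⁻¹ = 0 := by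
      simp only [Matrix.mul_neg, Matrix.mul_assoc]
      abel
    have b21 : (Φ*A) * (A⁻¹ + Φᵀ*D⁻¹*Φ) + (Φ*A*Φᵀ + D) * (-(D⁻¹*Φ)) = 0 := by
      rw [Matrix.mul_add, Matrix.add_mul]
      simp only [Matrix.mul_neg, Matrix.mul_assoc, hAinv, Matrix.mul_one]
      rw [← Matrix.mul_assoc D D⁻¹ Φ, hDinvD, Matrix.one_mul]
      abel
    have b22 : (Φ*A) * (-(Φᵀ*D⁻¹)) + (Φ*A*Φᵀ + D) * D⁻¹ = 1 := by
      rw [Matrix.add_mul, hDinvD]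
      simp only [Matrix.mul_neg, Matrix.mul_assoc]
      abel
    rw [b11, b12, b21, b22, Matrix.fromBlocks_one]
  -- determinants
  have hdetM : (fromBlocks A (A*Φᵀ) (Φ*A) (Φ*A*Φᵀ + D)).det = A.det * D.det := by
    rw [Matrix.det_fromBlocks₁₁, Matrix.invOf_eq_nonsing_inv]
    congr 1
    rw [show Φ*A*A⁻¹*(A*Φᵀ) = Φ*A*Φᵀ by
      rw [Matrix.mul_assoc (Φ*A) A⁻¹ (A*Φᵀ), ← Matrix.mul_assoc A⁻¹ A Φᵀ, hAinv',
        Matrix.one_mul, Matrix.mul_assoc]]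
    congr 1
    abel
  have hdetS : (fromBlocks A Wᵀ W Sm).det = A.det * (Sm - W*A⁻¹*Wᵀ).det := by
    rw [Matrix.det_fromBlocks₁₁, Matrix.invOf_eq_nonsing_inv]
  have hSchurdet : (Sm - W*A⁻¹*Wᵀ).det ≠ 0 := by
    intro h
    have := hblk.det_pos.ne'
    rw [hdetS, h, mul_zero] at this
    exact this rfl
  -- trace computation
  have htr : ((fromBlocks A (A*Φᵀ) (Φ*A) (Φ*A*Φᵀ + D))⁻¹ * fromBlocks A Wᵀ W Sm).trace
      = (n : ℝ) + (1/ε) * (Φᵀ*G⁻¹*Φ*A).trace - (2/ε) * (Φᵀ*G⁻¹*W).trace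
        + (1/ε) * (G⁻¹*Sm).trace := by
    rw [hMinv, Matrix.fromBlocks_multiply, trace_fromBlocks']
    have h1 : ((A⁻¹ + Φᵀ*D⁻¹*Φ) * A + -(Φᵀ*D⁻¹) * W).trace
        = (n : ℝ) + (1/ε) * (Φᵀ*G⁻¹*Φ*A).trace - (1/ε) * (Φᵀ*G⁻¹*W).trace := by
      rw [Matrix.add_mul, hAinv', hDinv]
      have e1 : Φᵀ*(ε⁻¹•G⁻¹)*Φ * A = ε⁻¹ • (Φᵀ*G⁻¹*Φ*A) := by
        simp [Matrix.mul_smul, Matrix.smul_mul]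
      have e2 : -(Φᵀ*(ε⁻¹•G⁻¹)) * W = -(ε⁻¹ • (Φᵀ*G⁻¹*W)) := by
        simp [Matrix.mul_smul, Matrix.smul_mul]
      rw [e1, e2, Matrix.trace_add, Matrix.trace_add, Matrix.trace_one, Matrix.trace_neg,
        Matrix.trace_smul, Matrix.trace_smul, Fintype.card_fin, smul_eq_mul, smul_eq_mul,
        one_div]
      ring
    have h2 : (-(D⁻¹*Φ) * Wᵀ + D⁻¹ * Sm).trace
        = -((1/ε) * (Φᵀ*G⁻¹*W).trace) + (1/ε) * (G⁻¹*Sm).trace := by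
      rw [Matrix.trace_add]
      congr 1
      · rw [Matrix.neg_mul, Matrix.trace_neg, neg_inj]
        have : (D⁻¹*Φ*Wᵀ).trace = (Φᵀ*D⁻¹*W).trace := by
          rw [← Matrix.trace_transpose (D⁻¹*Φ*Wᵀ)]
          rw [Matrix.transpose_mul, Matrix.transpose_mul, Matrix.transpose_transpose,
            Matrix.transpose_nonsing_inv, hDsym]
          rw [Matrix.trace_mul_comm, Matrix.mul_assoc]
        rw [this, hDinv]
        have e3 : Φᵀ*(ε⁻¹•G⁻¹)*W = ε⁻¹ • (Φᵀ*G⁻¹*W) := by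
          simp [Matrix.mul_smul, Matrix.smul_mul]
        rw [e3, Matrix.trace_smul, smul_eq_mul, one_div]
      · rw [hDinv, Matrix.smul_mul, Matrix.trace_smul, smul_eq_mul, one_div]
    rw [h1, h2]
    ring
  rw [htr, hdetM, hdetS, Real.log_mul hAdet.ne_zero hDdet.ne_zero,
    Real.log_mul hAdet.ne_zero hSchurdet]
  ring

/-- the Gaussian relative-entropy objective of the hybrid covariance
steering problem equals, up to an additive constant `c` independent of the decision
variables `(W₁, W₂, Σ⁻, Σ⁺)`, the convex expression
`(1/ε)tr(S₁⁻¹Σ⁻) − log det(Σ_T − W₂(Σ⁺)⁻¹W₂ᵀ) − (2/ε)tr(Φ₁ᵀS₁⁻¹W₁)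
 + (1/ε)tr(Φ₂ᵀS₂⁻¹Φ₂Σ⁺) − log det(Σ⁻ − W₁Σ₀⁻¹W₁ᵀ) − (2/ε)tr(Φ₂ᵀS₂⁻¹W₂)`. -/
theorem hybrid_cs_objective_convex_form {n₁ n₂ : ℕ}
    (S0 G1 : Matrix (Fin n₁) (Fin n₁) ℝ) (ST G2 : Matrix (Fin n₂) (Fin n₂) ℝ)
    (Φ1 : Matrix (Fin n₁) (Fin n₁) ℝ) (Φ2 : Matrix (Fin n₂) (Fin n₂) ℝ)
    (ε : ℝ) (hε : 0 < ε)
    (hS0 : S0.PosDef) (hG1 : G1.PosDef) (hST : ST.PosDef) (hG2 : G2.PosDef) :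
    ∃ c : ℝ,
      ∀ (W1 : Matrix (Fin n₁) (Fin n₁) ℝ) (W2 : Matrix (Fin n₂) (Fin n₂) ℝ)
        (Sm : Matrix (Fin n₁) (Fin n₁) ℝ) (Sp : Matrix (Fin n₂) (Fin n₂) ℝ),
        Sm.PosDef → Sp.PosDef →
        (Matrix.fromBlocks S0 W1ᵀ W1 Sm).PosDef →
        (Matrix.fromBlocks Sp W2ᵀ W2 ST).PosDef →
        (Real.log (Matrix.fromBlocks S0 (S0 * Φ1ᵀ) (Φ1 * S0)
              (Φ1 * S0 * Φ1ᵀ + ε • G1)).det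
            - Real.log (Matrix.fromBlocks S0 W1ᵀ W1 Sm).det
            + ((Matrix.fromBlocks S0 (S0 * Φ1ᵀ) (Φ1 * S0)
                (Φ1 * S0 * Φ1ᵀ + ε • G1))⁻¹
              * Matrix.fromBlocks S0 W1ᵀ W1 Sm).trace)
          + (Real.log (Matrix.fromBlocks Sp (Sp * Φ2ᵀ) (Φ2 * Sp)
              (Φ2 * Sp * Φ2ᵀ + ε • G2)).det
            - Real.log (Matrix.fromBlocks Sp W2ᵀ W2 ST).det
            + ((Matrix.fromBlocks Sp (Sp * Φ2ᵀ) (Φ2 * Sp)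
                (Φ2 * Sp * Φ2ᵀ + ε • G2))⁻¹
              * Matrix.fromBlocks Sp W2ᵀ W2 ST).trace)
        = (1 / ε) * (G1⁻¹ * Sm).trace
            - Real.log (ST - W2 * Sp⁻¹ * W2ᵀ).det
            - (2 / ε) * (Φ1ᵀ * G1⁻¹ * W1).trace
            + (1 / ε) * (Φ2ᵀ * G2⁻¹ * Φ2 * Sp).trace
            - Real.log (Sm - W1 * S0⁻¹ * W1ᵀ).det
            - (2 / ε) * (Φ2ᵀ * G2⁻¹ * W2).trace
            + c := by
  refine ⟨(1/ε) * (Φ1ᵀ*G1⁻¹*Φ1*S0).trace + Real.log ((ε•G1 : Matrix (Fin n₁) (Fin n₁) ℝ).det)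
      + n₁ + (1/ε) * (G2⁻¹*ST).trace + Real.log ((ε•G2 : Matrix (Fin n₂) (Fin n₂) ℝ).det) + n₂, ?_⟩
  intro W1 W2 Sm Sp hSm hSp hb1 hb2
  rw [key S0 G1 Φ1 W1 Sm ε hε hS0 hG1 hb1, key Sp G2 Φ2 W2 ST ε hε hSp hG2 hb2]
  ring
end
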